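/- For every Markov decision process with finite state and action spaces and a reachability objective ◇T, there exists a pure memoryless strategy π* such that Pr^{π*}(◇T) = sup over all strategies π of Pr^{π}(◇T). -/

import Mathlib

open scoped BigOperators

/-- A Markov decision process with finite state space `S`, finite action space `A`, a
partial probabilistic transition function and an initial state. -/
structure MDP (S A : Type) [Fintype S] [Fintype A] where
  P : S → A → Option (S → ℝ)
  P_nonneg : ∀ s a d, P s a = some d → ∀ s', 0 ≤ d s'
  P_sum_one : ∀ s a d, P s a = some d → ∑ s', d s' = 1
  s0 : S

variable {S A : Type} [Fintype S] [Fintype A]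

/-- A (history-dependent, randomized) strategy: given the past states and the current
state, a probability distribution over actions, supported on defined actions. -/
structure MDP.Strategy (M : MDP S A) where
  σ : List S → S → A → ℝ
  nonneg : ∀ h s a, 0 ≤ σ h s a
  sum_one : ∀ h s, ∑ a, σ h s a = 1
  supported : ∀ h s a, σ h s a ≠ 0 → (M.P s a).isSome

/-- Probability of reaching the target set `T` within `n` steps, starting from state `s`
with history `h`, under strategy `σ`. -/
noncomputable def MDP.reachVal (M : MDP S A) (T : Set S) [DecidablePred (· ∈ T)]
    (σ : List S → S → A → ℝ) : ℕ → List S → S → ℝ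
  | 0, _, s => if s ∈ T then 1 else 0
  | n + 1, h, s =>
    if s ∈ T then 1
    else ∑ a, σ h s a *
      ((M.P s a).elim 0 fun d => ∑ s', d s' * M.reachVal T σ n (h ++ [s]) s')

/-- Probability of the reachability event `◇T` under strategy `σ`, as the supremum of the
step-bounded reachability probabilities. -/
noncomputable def MDP.prReach (M : MDP S A) (T : Set S) [DecidablePred (· ∈ T)]
    (σ : List S → S → A → ℝ) : ℝ :=
  ⨆ n : ℕ, M.reachVal T σ n [] M.s0

/-- The (deterministic, memoryless) strategy induced by a choice function `π : S → A`. -/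
noncomputable def MDP.pureMemoryless (M : MDP S A) [DecidableEq A] (π : S → A) :
    List S → S → A → ℝ :=
  fun _ s a => if a = π s then 1 else 0


/-!
Among the finitely many pure memoryless strategies that choose enabled actions, take one, `π`,
maximising the sum over all states of its reachability values `W π` (`pureValue`). Then `W π`
is superharmonic: no enabled action `a` at a state `s ∉ T` has expected value `Q(s, a, W π)`
(`actionValue`) above `W π s`. Otherwise, switching `π` to `a` at `s` would not decrease the value anywhere (a
maximum-gap argument) and would raise it at `s`, contradicting maximality. A nonnegative
superharmonic function that is at least `1` on `T` bounds, by induction on the horizon, the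
step-bounded reachability probabilities of every history-dependent randomized strategy, so `π`
is optimal.
-/

open Filter Topology Finset

namespace MDP

noncomputable section

variable (M : MDP S A)

def actionValue (s : S) (a : A) (v : S → ℝ) : ℝ :=
  (M.P s a).elim 0 fun d => ∑ s', d s' * v s'

variable {M}

section actionValue

variable {s : S} {a : A} {v w : S → ℝ}

@[simp]
lemma actionValue_of_eq_none (h : M.P s a = none) (v : S → ℝ) : M.actionValue s a v = 0 := by
  simp [actionValue, h]

@[simp]
lemma actionValue_of_eq_some {d : S → ℝ} (h : M.P s a = some d) (v : S → ℝ) :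
    M.actionValue s a v = ∑ s', d s' * v s' := by
  simp [actionValue, h]

lemma actionValue_nonneg (hv : ∀ u, 0 ≤ v u) : 0 ≤ M.actionValue s a v := by
  rcases h : M.P s a with _ | d
  · simp [h]
  · rw [actionValue_of_eq_some h]
    exact sum_nonneg fun u _ => mul_nonneg (M.P_nonneg s a d h u) (hv u)

lemma actionValue_mono (hvw : ∀ u, v u ≤ w u) : M.actionValue s a v ≤ M.actionValue s a w := by
  rcases h : M.P s a with _ | d
  · simp [h]
  · simp only [actionValue_of_eq_some h]
    exact sum_le_sum fun u _ => mul_le_mul_of_nonneg_left (hvw u) (M.P_nonneg s a d h u)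

lemma actionValue_le_of_isSome {c : ℝ} (ha : (M.P s a).isSome) (hv : ∀ u, v u ≤ c) :
    M.actionValue s a v ≤ c := by
  obtain ⟨d, h⟩ := Option.isSome_iff_exists.1 ha
  calc M.actionValue s a v ≤ ∑ u, d u * c := by
        rw [actionValue_of_eq_some h]
        exact sum_le_sum fun u _ => mul_le_mul_of_nonneg_left (hv u) (M.P_nonneg s a d h u)
    _ = c := by rw [← sum_mul, M.P_sum_one s a d h, one_mul]

lemma actionValue_le {c : ℝ} (hc : 0 ≤ c) (hv : ∀ u, v u ≤ c) : M.actionValue s a v ≤ c := by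
  rcases h : M.P s a with _ | d
  · simpa [h] using hc
  · exact actionValue_le_of_isSome (by simp [h]) hv

lemma actionValue_sub :
    M.actionValue s a v - M.actionValue s a w = M.actionValue s a fun u => v u - w u := by
  rcases h : M.P s a with _ | d
  · simp [h]
  · simp only [actionValue_of_eq_some h, mul_sub, sum_sub_distrib]

lemma actionValue_eq_zero (hv : ∀ d, M.P s a = some d → ∀ u, 0 < d u → v u = 0) :
    M.actionValue s a v = 0 := by
  rcases h : M.P s a with _ | d
  · simp [h]
  · rw [actionValue_of_eq_some h]
    refine sum_eq_zero fun u _ => ?_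
    rcases (M.P_nonneg s a d h u).eq_or_lt with hu | hu
    · rw [← hu, zero_mul]
    · rw [hv d h u hu, mul_zero]

lemma eq_of_le_actionValue {d : S → ℝ} {c : ℝ} (h : M.P s a = some d) (hv : ∀ u, v u ≤ c)
    (hc : c ≤ M.actionValue s a v) {u : S} (hu : 0 < d u) : v u = c := by
  have hterm : ∀ u' ∈ univ, 0 ≤ d u' * (c - v u') :=
    fun u' _ => mul_nonneg (M.P_nonneg s a d h u') (sub_nonneg.2 (hv u'))
  have hzero : ∑ u', d u' * (c - v u') = 0 := by
    refine le_antisymm ?_ (sum_nonneg hterm)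
    rw [actionValue_of_eq_some h] at hc
    simp only [mul_sub, sum_sub_distrib, ← sum_mul, M.P_sum_one s a d h, one_mul]
    linarith
  have := (sum_eq_zero_iff_of_nonneg hterm).1 hzero u (mem_univ u)
  rcases mul_eq_zero.1 this with h0 | h0
  · exact absurd h0 hu.ne'
  · linarith

lemma tendsto_actionValue {v : ℕ → S → ℝ} (hv : ∀ u, Tendsto (fun n => v n u) atTop (𝓝 (w u))) :
    Tendsto (fun n => M.actionValue s a (v n)) atTop (𝓝 (M.actionValue s a w)) := by
  rcases h : M.P s a with _ | d
  · simp [h]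
  · simp only [actionValue_of_eq_some h]
    exact tendsto_finsetSum _ fun u _ => (hv u).const_mul (d u)

end actionValue

variable (T : Set S) [DecidablePred (· ∈ T)]

structure IsSuperharmonic (v : S → ℝ) : Prop where
  nonneg : ∀ s, 0 ≤ v s
  one_le_of_mem : ∀ s ∈ T, 1 ≤ v s
  actionValue_le : ∀ s ∉ T, ∀ a, (M.P s a).isSome → M.actionValue s a v ≤ v s

lemma reachVal_le_of_isSuperharmonic (σ : M.Strategy) {v : S → ℝ} (hv : M.IsSuperharmonic T v) :
    ∀ n h s, M.reachVal T σ.σ n h s ≤ v s := by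
  intro n
  induction n with
  | zero =>
    intro h s
    by_cases hs : s ∈ T
    · simpa [reachVal, hs] using hv.one_le_of_mem s hs
    · simpa [reachVal, hs] using hv.nonneg s
  | succ n ih =>
    intro h s
    by_cases hs : s ∈ T
    · simpa [reachVal, hs] using hv.one_le_of_mem s hs
    change (if s ∈ T then 1 else
      ∑ a, σ.σ h s a * M.actionValue s a (M.reachVal T σ.σ n (h ++ [s]))) ≤ v s
    rw [if_neg hs]
    calc ∑ a, σ.σ h s a * M.actionValue s a (M.reachVal T σ.σ n (h ++ [s]))
        ≤ ∑ a, σ.σ h s a * v s := by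
          refine sum_le_sum fun a _ => ?_
          rcases (σ.nonneg h s a).eq_or_lt with h0 | h0
          · rw [← h0, zero_mul, zero_mul]
          · refine mul_le_mul_of_nonneg_left ?_ h0.le
            exact (actionValue_mono (ih (h ++ [s]))).trans
              (hv.actionValue_le s hs a (σ.supported h s a h0.ne'))
      _ = v s := by rw [← sum_mul, σ.sum_one h s, one_mul]

lemma prReach_le_of_isSuperharmonic (σ : M.Strategy) {v : S → ℝ} (hv : M.IsSuperharmonic T v) :
    M.prReach T σ.σ ≤ v M.s0 :=
  ciSup_le fun n => M.reachVal_le_of_isSuperharmonic T σ hv n [] M.s0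

variable (M)

def pureReachVal (π : S → A) : ℕ → S → ℝ
  | 0, s => if s ∈ T then 1 else 0
  | n + 1, s => if s ∈ T then 1 else M.actionValue s (π s) (pureReachVal π n)

def pureValue (π : S → A) (s : S) : ℝ := ⨆ n, M.pureReachVal T π n s

variable {M T} {π : S → A}

lemma pureReachVal_of_mem {s : S} (hs : s ∈ T) (n : ℕ) : M.pureReachVal T π n s = 1 := by
  cases n <;> simp [pureReachVal, hs]

lemma pureReachVal_succ_of_not_mem {s : S} (hs : s ∉ T) (n : ℕ) :
    M.pureReachVal T π (n + 1) s = M.actionValue s (π s) (M.pureReachVal T π n) := by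
  simp [pureReachVal, hs]

lemma pureReachVal_nonneg (n : ℕ) (s : S) : 0 ≤ M.pureReachVal T π n s := by
  induction n generalizing s with
  | zero => unfold pureReachVal; split_ifs <;> norm_num
  | succ n ih => unfold pureReachVal; split_ifs; exacts [zero_le_one, actionValue_nonneg ih]

lemma pureReachVal_le_one (n : ℕ) (s : S) : M.pureReachVal T π n s ≤ 1 := by
  induction n generalizing s with
  | zero => unfold pureReachVal; split_ifs <;> norm_num
  | succ n ih => unfold pureReachVal; split_ifs; exacts [le_rfl, actionValue_le zero_le_one ih]

lemma pureReachVal_le_succ (n : ℕ) (s : S) :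
    M.pureReachVal T π n s ≤ M.pureReachVal T π (n + 1) s := by
  by_cases hs : s ∈ T
  · rw [pureReachVal_of_mem hs, pureReachVal_of_mem hs]
  induction n generalizing s with
  | zero => simpa [pureReachVal, hs] using pureReachVal_nonneg (M := M) (T := T) (π := π) 1 s
  | succ n ih =>
    rw [pureReachVal_succ_of_not_mem hs, pureReachVal_succ_of_not_mem hs]
    refine actionValue_mono fun u => ?_
    by_cases hu : u ∈ T
    · rw [pureReachVal_of_mem hu, pureReachVal_of_mem hu]
    · exact ih u hu

lemma tendsto_pureReachVal (s : S) :
    Tendsto (fun n => M.pureReachVal T π n s) atTop (𝓝 (M.pureValue T π s)) :=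
  tendsto_atTop_ciSup (monotone_nat_of_le_succ fun n => pureReachVal_le_succ n s)
    ⟨1, Set.forall_mem_range.2 fun n => pureReachVal_le_one n s⟩

lemma pureValue_nonneg (s : S) : 0 ≤ M.pureValue T π s :=
  ge_of_tendsto' (tendsto_pureReachVal s) fun n => pureReachVal_nonneg n s

lemma pureValue_of_mem {s : S} (hs : s ∈ T) : M.pureValue T π s = 1 := by
  simp [pureValue, pureReachVal_of_mem hs]

lemma pureValue_of_not_mem {s : S} (hs : s ∉ T) :
    M.pureValue T π s = M.actionValue s (π s) (M.pureValue T π) := by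
  refine tendsto_nhds_unique ((tendsto_add_atTop_iff_nat 1).2 (tendsto_pureReachVal s)) ?_
  simp only [pureReachVal_succ_of_not_mem hs]
  exact tendsto_actionValue fun u => tendsto_pureReachVal u

lemma pureValue_eq_zero_of_closed {F : Set S} (hFT : ∀ t ∈ F, t ∉ T)
    (hF : ∀ t ∈ F, ∀ d, M.P t (π t) = some d → ∀ u, 0 < d u → u ∈ F) {t : S} (ht : t ∈ F) :
    M.pureValue T π t = 0 := by
  have hzero : ∀ n, ∀ t ∈ F, M.pureReachVal T π n t = 0 := by
    intro n
    induction n with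
    | zero => intro t ht; simp [pureReachVal, hFT t ht]
    | succ n ih =>
      intro t ht
      rw [pureReachVal_succ_of_not_mem (hFT t ht)]
      exact actionValue_eq_zero fun d hd u hu => ih u (hF t ht d hd u hu)
  simp [pureValue, hzero _ t ht]

lemma isSuperharmonic_pureValue
    (h : ∀ s ∉ T, ∀ a, (M.P s a).isSome → M.actionValue s a (M.pureValue T π) ≤ M.pureValue T π s) :
    M.IsSuperharmonic T (M.pureValue T π) :=
  ⟨pureValue_nonneg, fun _ hs => (pureValue_of_mem hs).ge, h⟩

/- On the set `F` where the gap `W π - W π'` is maximal, the gap propagates along the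
transitions of `π` and cannot sit at `s`; so `π` never leaves `F` or reaches `T` from it, and the
maximal gap is `0 - W π' ≤ 0`. -/
lemma pureValue_le_pureValue_update [DecidableEq S] {s : S} {a : A} (hs : s ∉ T)
    (ha : (M.P s a).isSome) (himp : M.pureValue T π s < M.actionValue s a (M.pureValue T π))
    (t : S) : M.pureValue T π t ≤ M.pureValue T (Function.update π s a) t := by
  set π' := Function.update π s a
  set g : S → ℝ := fun u => M.pureValue T π u - M.pureValue T π' u
  by_contra! hlt
  obtain ⟨t₀, -, hmax⟩ := exists_max_image univ g ⟨t, mem_univ t⟩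
  have hg : ∀ u, g u ≤ g t₀ := fun u => hmax u (mem_univ u)
  have hpos : 0 < g t₀ := (sub_pos.2 hlt).trans_le (hg t)
  let F : Set S := {u | g u = g t₀}
  have hFT : ∀ u ∈ F, u ∉ T := fun u hu huT => by
    simp only [F, Set.mem_ofPred_eq, g, pureValue_of_mem huT, sub_self] at hu
    linarith
  have hFs : ∀ u ∈ F, u ≠ s := by
    rintro u hu rfl
    have hs' : M.pureValue T π' u = M.actionValue u a (M.pureValue T π') := by
      rw [pureValue_of_not_mem hs, show π' u = a from Function.update_self u a π]
    have : g u < M.actionValue u a g := by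
      simp only [g, ← actionValue_sub]
      linarith
    linarith [actionValue_le_of_isSome ha hg, show g u = g t₀ from hu]
  have hF : ∀ u ∈ F, ∀ d, M.P u (π u) = some d → ∀ u', 0 < d u' → u' ∈ F := by
    intro u hu d hd u' hu'
    have hπ' : π' u = π u := Function.update_of_ne (hFs u hu) _ _
    have hgu : g u = M.actionValue u (π u) g := by
      simp only [g, ← actionValue_sub]
      rw [← hπ', ← pureValue_of_not_mem (hFT u hu), hπ', ← pureValue_of_not_mem (hFT u hu)]
    exact eq_of_le_actionValue hd hg (by rw [← hgu]; exact (show g u = g t₀ from hu).ge) hu'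
  have hzero := pureValue_eq_zero_of_closed hFT hF (show t₀ ∈ F from rfl)
  have hg₀ : g t₀ = M.pureValue T π t₀ - M.pureValue T π' t₀ := rfl
  linarith [pureValue_nonneg (M := M) (T := T) (π := π') t₀]

lemma pureValue_lt_pureValue_update_self [DecidableEq S] {s : S} {a : A} (hs : s ∉ T)
    (ha : (M.P s a).isSome) (himp : M.pureValue T π s < M.actionValue s a (M.pureValue T π)) :
    M.pureValue T π s < M.pureValue T (Function.update π s a) s := by
  rw [pureValue_of_not_mem (π := Function.update π s a) hs, Function.update_self]
  exact himp.trans_le (actionValue_mono (pureValue_le_pureValue_update hs ha himp))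

variable (M T)

lemma exists_isSuperharmonic_pureValue (hA : ∀ s, ∃ a, (M.P s a).isSome) :
    ∃ π : S → A, (∀ s, (M.P s (π s)).isSome) ∧ M.IsSuperharmonic T (M.pureValue T π) := by
  classical
  let enabled : Finset (S → A) := univ.filter fun π => ∀ s, (M.P s (π s)).isSome
  obtain ⟨π, hπmem, hmax⟩ := enabled.exists_max_image (fun π => ∑ s, M.pureValue T π s)
    ⟨fun s => (hA s).choose, mem_filter.2 ⟨mem_univ _, fun s => (hA s).choose_spec⟩⟩
  have hπ : ∀ s, (M.P s (π s)).isSome := (mem_filter.1 hπmem).2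
  refine ⟨π, hπ, isSuperharmonic_pureValue fun s hs a ha => ?_⟩
  by_contra! himp
  have hupdate : Function.update π s a ∈ enabled := by
    refine mem_filter.2 ⟨mem_univ _, fun t => ?_⟩
    rcases eq_or_ne t s with rfl | hts
    · simpa using ha
    · simpa [Function.update_of_ne hts] using hπ t
  have hsum : ∑ t, M.pureValue T π t < ∑ t, M.pureValue T (Function.update π s a) t :=
    sum_lt_sum (fun t _ => pureValue_le_pureValue_update hs ha himp t)
      ⟨s, mem_univ s, pureValue_lt_pureValue_update_self hs ha himp⟩
  exact (hmax _ hupdate).not_gt hsum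

lemma reachVal_pureMemoryless [DecidableEq A] (π : S → A) (n : ℕ) (h : List S) (s : S) :
    M.reachVal T (M.pureMemoryless π) n h s = M.pureReachVal T π n s := by
  induction n generalizing h s with
  | zero => simp [reachVal, pureReachVal]
  | succ n ih =>
    by_cases hs : s ∈ T
    · simp [reachVal, pureReachVal, hs]
    change (if s ∈ T then 1 else ∑ a, M.pureMemoryless π h s a *
      M.actionValue s a (M.reachVal T (M.pureMemoryless π) n (h ++ [s]))) = _
    have hcont : M.reachVal T (M.pureMemoryless π) n (h ++ [s]) = M.pureReachVal T π n :=
      funext (ih _)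
    simp [pureMemoryless, pureReachVal, hs, hcont]

lemma prReach_pureMemoryless [DecidableEq A] (π : S → A) :
    M.prReach T (M.pureMemoryless π) = M.pureValue T π M.s0 := by
  simp only [prReach, pureValue, reachVal_pureMemoryless]

def pureStrategy [DecidableEq A] (π : S → A) (hπ : ∀ s, (M.P s (π s)).isSome) : M.Strategy where
  σ := M.pureMemoryless π
  nonneg h s a := by unfold pureMemoryless; split_ifs <;> norm_num
  sum_one h s := by simp [pureMemoryless]
  supported h s a ha := by
    unfold pureMemoryless at ha
    split_ifs at ha with hap
    · exact hap ▸ hπ s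
    · exact absurd rfl ha

end

end MDP

/-- For every finite MDP and reachability objective `◇T`, there is a pure memoryless
strategy `π*` with `Pr^{π*}(◇T) = sup_π Pr^{π}(◇T)`. -/
theorem stmt_10 [DecidableEq A] (M : MDP S A) (T : Set S) [DecidablePred (· ∈ T)]
    (hA : ∀ s, ∃ a, (M.P s a).isSome) :
    ∃ π : S → A, (∀ s, (M.P s (π s)).isSome) ∧
      M.prReach T (M.pureMemoryless π) = ⨆ σ : M.Strategy, M.prReach T σ.σ := by
  obtain ⟨π, hπ, hsup⟩ := M.exists_isSuperharmonic_pureValue T hA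
  have hle : ∀ σ : M.Strategy, M.prReach T σ.σ ≤ M.pureValue T π M.s0 :=
    fun σ => M.prReach_le_of_isSuperharmonic T σ hsup
  have : Nonempty M.Strategy := ⟨M.pureStrategy π hπ⟩
  refine ⟨π, hπ, le_antisymm ?_ ?_⟩
  · exact le_ciSup ⟨_, Set.forall_mem_range.2 hle⟩ (M.pureStrategy π hπ)
  · rw [M.prReach_pureMemoryless T π]
    exact ciSup_le hle
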